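/- arXiv:math/0105247 — 5 statements merged into one kernel-verified Lean document; each statement's English description precedes it below -/
import Mathlib

section
/- Let A be a finite-dimensional semisimple associative algebra over an algebraically closed field K of characteristic zero, and let M be a finite-dimensional A-A-bimodule equipped with a balanced symplectic bilinear form ω (i.e., ω is alternating, nondegenerate, and ω(x, a•y) = ω(x•a, y) for all a ∈ A, x,y ∈ M). Then any simple sub-bimodule T of M is isotropic, i.e., ω vanishes identically on T × T. -/
open MulOpposite

/-- Every left ideal of a semisimple ring has a right unit inside it. -/
theorem aux_exists_right_unit {A : Type*} [Ring A] [IsSemisimpleRing A]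
    (L : Submodule A A) : ∃ e ∈ L, ∀ x ∈ L, x * e = x := by
  obtain ⟨C, hC⟩ := exists_isCompl L
  have h1 : (1 : A) ∈ L ⊔ C := by rw [hC.sup_eq_top]; trivial
  obtain ⟨e, he, c, hc, hec⟩ := Submodule.mem_sup.mp h1
  refine ⟨e, he, fun x hx => ?_⟩
  have h2 : x * e + x * c = x := by rw [← mul_add, hec, mul_one]
  have hxe : x * e ∈ L := by simpa [smul_eq_mul] using L.smul_mem x he
  have hxc : x * c ∈ C := by simpa [smul_eq_mul] using C.smul_mem x hc
  have hmem : x - x * e ∈ L ⊓ C := by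
    refine ⟨sub_mem hx hxe, ?_⟩
    have : x - x * e = x * c := sub_eq_of_eq_add' h2.symm
    rw [this]; exact hxc
  rw [hC.inf_eq_bot, Submodule.mem_bot] at hmem
  have := sub_eq_zero.mp hmem
  exact this.symm

theorem aux_sq_zero_eq_bot {A : Type*} [Ring A] [IsSemisimpleRing A]
    (L : Submodule A A) (h : ∀ x ∈ L, ∀ y ∈ L, x * y = 0) : L = ⊥ := by
  obtain ⟨e, he, key⟩ := aux_exists_right_unit L
  have he0 : e = 0 := by rw [← key e he]; exact h e he e he
  rw [eq_bot_iff]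
  intro x hx
  rw [Submodule.mem_bot, ← key x hx, he0, mul_zero]

/-- If `y * c * y = 0` for all `c`, then `y = 0` (in a semisimple ring). -/
theorem aux_ann_zero {A : Type*} [Ring A] [IsSemisimpleRing A]
    (y : A) (h : ∀ c : A, y * c * y = 0) : y = 0 := by
  set L : Submodule A A := Submodule.span A {z | ∃ b, z = y * b} with hL
  have key : ∀ z ∈ L, ∀ c : A, (y * c) * z = 0 := by
    intro z hz
    induction hz using Submodule.span_induction with
    | mem x hx => obtain ⟨b, rfl⟩ := hx; intro c
                  rw [← mul_assoc, h c, zero_mul]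
    | zero => intro c; rw [mul_zero]
    | add x y' hx hy' ihx ihy' => intro c; rw [mul_add, ihx c, ihy' c, add_zero]
    | smul a x hx ih => intro c
                        rw [smul_eq_mul, ← mul_assoc, mul_assoc y c a, ih (c * a)]
  have key2 : ∀ z ∈ L, ∀ z' ∈ L, z * z' = 0 := by
    intro z hz
    induction hz using Submodule.span_induction with
    | mem x hx => obtain ⟨b, rfl⟩ := hx; intro z' hz'; exact key z' hz' b
    | zero => intro z' hz'; rw [zero_mul]
    | add x y' hx hy' ihx ihy' => intro z' hz'; rw [add_mul, ihx z' hz', ihy' z' hz', add_zero]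
    | smul a x hx ih => intro z' hz'; rw [smul_eq_mul, mul_assoc, ih z' hz', mul_zero]
  have hmem : y ∈ L := Submodule.subset_span ⟨1, (mul_one y).symm⟩
  have := aux_sq_zero_eq_bot L key2
  rw [this, Submodule.mem_bot] at hmem
  exact hmem

open MulOpposite

theorem aux_atom_idem {A : Type*} [Ring A] [IsSemisimpleRing A]
    (J : Submodule A A) (hJ : IsAtom J) :
    ∃ f ∈ J, f ≠ 0 ∧ ∀ x ∈ J, x * f = x := by
  obtain ⟨e, he, key⟩ := aux_exists_right_unit J
  refine ⟨e, he, ?_, key⟩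
  intro h0
  apply hJ.1
  rw [eq_bot_iff]; intro x hx
  rw [Submodule.mem_bot, ← key x hx, h0, mul_zero]

theorem aux_schur {K A : Type*} [Field K] [IsAlgClosed K] [Ring A] [Algebra K A]
    [FiniteDimensional K A]
    (J : Submodule A A) (hJ : IsAtom J) (f : A) (hfJ : f ∈ J) (hf0 : f ≠ 0)
    (hid : ∀ x ∈ J, x * f = x) :
    ∀ a : A, ∃ lam : K, f * a * f = lam • f := by
  have hff : f * f = f := hid f hfJ
  set F : Submodule K A :=
    { carrier := {x | f * x * f = x}
      add_mem' := by
        intro a b ha hb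
        simp only [Set.mem_setOf_eq] at *
        rw [mul_add, add_mul, ha, hb]
      zero_mem' := by simp
      smul_mem' := by
        intro k x hx
        simp only [Set.mem_setOf_eq] at *
        rw [mul_smul_comm, smul_mul_assoc, hx] } with hFdef
  have memF : ∀ x : A, x ∈ F ↔ f * x * f = x := fun x => Iff.rfl
  have hFl : ∀ x ∈ F, f * x = x := by
    intro x hx
    have hx' : f * x * f = x := hx
    calc f * x = f * (f * x * f) := by rw [hx']
      _ = ((f * f) * x) * f := by rw [← mul_assoc f (f*x) f, ← mul_assoc f f x]
      _ = f * x * f := by rw [hff]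
      _ = x := hx'
  have hFr : ∀ x ∈ F, x * f = x := by
    intro x hx
    have hx' : f * x * f = x := hx
    calc x * f = (f * x * f) * f := by rw [hx']
      _ = (f * x) * (f * f) := by rw [mul_assoc (f*x) f f]
      _ = f * x * f := by rw [hff]
      _ = x := hx'
  have hsand : ∀ c : A, f * c * f ∈ F := by
    intro c
    rw [memF]
    simp only [← mul_assoc]
    rw [hff, mul_assoc (f*c) f f, hff]
  have hfF : f ∈ F := by rw [memF, hff, hff]
  have hFJ : ∀ x ∈ F, x ∈ J := by
    intro x hx
    have h1 : x * f ∈ J := by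
      have := J.smul_mem x hfJ; rwa [smul_eq_mul] at this
    rwa [hFr x hx] at h1
  have hinv : ∀ w ∈ F, w ≠ 0 → ∃ w' ∈ F, w' * w = f := by
    intro w hwF hw0
    have hwJ : w ∈ J := hFJ w hwF
    have hsp : Submodule.span A {w} = J := by
      have hle : Submodule.span A {w} ≤ J := by
        rw [Submodule.span_le]; simpa using hwJ
      rcases lt_or_eq_of_le hle with hlt | heq
      · exfalso
        have hbot := hJ.2 _ hlt
        have hmem : w ∈ Submodule.span A {w} := Submodule.mem_span_singleton_self w
        rw [hbot, Submodule.mem_bot] at hmem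
        exact hw0 hmem
      · exact heq
    have hf : f ∈ Submodule.span A {w} := by rw [hsp]; exact hfJ
    obtain ⟨b, hb⟩ := Submodule.mem_span_singleton.mp hf
    rw [smul_eq_mul] at hb
    refine ⟨f * b * f, hsand b, ?_⟩
    calc (f * b * f) * w = (f * b) * (f * w) := by rw [mul_assoc (f*b) f w]
      _ = (f * b) * w := by rw [hFl w hwF]
      _ = f * (b * w) := by rw [mul_assoc]
      _ = f * f := by rw [hb]
      _ = f := hff
  intro a
  by_cases hw0 : f * a * f = 0
  · exact ⟨0, by rw [hw0, zero_smul]⟩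
  set w := f * a * f with hwdef
  have hwF : w ∈ F := hsand a
  haveI : Nontrivial F := by
    refine ⟨⟨⟨f, hfF⟩, 0, ?_⟩⟩
    intro hcontra
    exact hf0 (congrArg Subtype.val hcontra)
  have hmulmem : ∀ x : F, w * x.val ∈ F := by
    intro x
    rw [memF, ← mul_assoc f w x.val, hFl w hwF, mul_assoc w x.val f, hFr x.val x.property]
  set mw : Module.End K F :=
    { toFun := fun x => ⟨w * x.val, hmulmem x⟩
      map_add' := by intro x y; ext; simp [mul_add]
      map_smul' := by intro k x; ext; simp [mul_smul_comm] } with hmwdef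
  obtain ⟨μ, hμ⟩ := Module.End.exists_eigenvalue mw
  obtain ⟨v, hv⟩ := hμ.exists_hasEigenvector
  have hveq : w * v.val = μ • v.val := by
    have h1 := hv.apply_eq_smul
    have := congrArg Subtype.val h1
    simpa [hmwdef] using this
  set w₂ := w - μ • f with hw₂def
  have hw₂F : w₂ ∈ F := F.sub_mem hwF (F.smul_mem μ hfF)
  have hw₂v : w₂ * v.val = 0 := by
    rw [hw₂def, sub_mul, smul_mul_assoc, hFl v.val v.property, hveq, sub_self]
  have hw₂0 : w₂ = 0 := by
    by_contra hne
    obtain ⟨w', hw'F, hw'⟩ := hinv w₂ hw₂F hne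
    have hv0 : v.val = 0 := by
      calc v.val = f * v.val := (hFl v.val v.property).symm
        _ = (w' * w₂) * v.val := by rw [hw']
        _ = w' * (w₂ * v.val) := by rw [mul_assoc]
        _ = 0 := by rw [hw₂v, mul_zero]
    exact hv.right (Subtype.ext hv0)
  exact ⟨μ, sub_eq_zero.mp hw₂0⟩

set_option maxHeartbeats 2000000

open Module

/-- Any simple sub-bimodule of a bimodule with a balanced symplectic form is isotropic. -/
theorem stmt_0 (K : Type*) [Field K] [IsAlgClosed K] [CharZero K]
    (A : Type*) [Ring A] [Algebra K A] [FiniteDimensional K A] [IsSemisimpleRing A]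
    (M : Type*) [AddCommGroup M] [Module K M] [FiniteDimensional K M]
    [Module A M] [Module Aᵐᵒᵖ M]
    [IsScalarTower K A M] [IsScalarTower K Aᵐᵒᵖ M]
    [SMulCommClass A Aᵐᵒᵖ M]
    (ω : M →ₗ[K] M →ₗ[K] K)
    (halt : ∀ x : M, ω x x = 0)
    (hnd : ∀ x : M, (∀ y : M, ω x y = 0) → x = 0)
    (hbal : ∀ (a : A) (x y : M), ω x (a • y) = ω (op a • x) y)
    (T : Submodule K M)
    (hTl : ∀ (a : A) (t : M), t ∈ T → a • t ∈ T)
    (hTr : ∀ (a : A) (t : M), t ∈ T → op a • t ∈ T)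
    (hTbot : T ≠ ⊥)
    (hTsimple : ∀ S : Submodule K M, S ≤ T →
      (∀ (a : A) (s : M), s ∈ S → a • s ∈ S) →
      (∀ (a : A) (s : M), s ∈ S → op a • s ∈ S) →
      S = ⊥ ∨ S = T) :
    ∀ t ∈ T, ∀ t' ∈ T, ω t t' = 0 := by
  classical
  haveI : SMulCommClass Aᵐᵒᵖ A M := SMulCommClass.symm A Aᵐᵒᵖ M
  -- Basic identities
  have hskew : ∀ x y : M, ω x y = - ω y x := by
    intro x y
    have h0 := halt (x + y)
    simp only [map_add, LinearMap.add_apply] at h0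
    rw [halt x, halt y] at h0
    linear_combination h0
  have h2 : ∀ (a : A) (x y : M), ω (a • x) y = ω x (op a • y) := by
    intro a x y
    rw [hskew (a • x) y, hbal a y x, ← hskew x (op a • y)]
  have hKA : ∀ (k : K) (a : A) (m : M), a • (k • m) = k • (a • m) := by
    intro k a m
    rw [← algebraMap_smul A k m, ← mul_smul, ← Algebra.commutes k a, mul_smul, algebraMap_smul]
  have hKAop : ∀ (k : K) (a : Aᵐᵒᵖ) (m : M), a • (k • m) = k • (a • m) := by
    intro k a m
    rw [← algebraMap_smul Aᵐᵒᵖ k m, ← mul_smul, ← Algebra.commutes k a, mul_smul, algebraMap_smul]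
  -- The radical of ω restricted to T
  set S : Submodule K M :=
    { carrier := {x | x ∈ T ∧ ∀ y ∈ T, ω x y = 0}
      add_mem' := by
        rintro x y ⟨hxT, hx⟩ ⟨hyT, hy⟩
        refine ⟨T.add_mem hxT hyT, fun z hz => ?_⟩
        rw [map_add, LinearMap.add_apply, hx z hz, hy z hz, add_zero]
      zero_mem' := ⟨T.zero_mem, fun z _ => by simp⟩
      smul_mem' := by
        rintro k x ⟨hxT, hx⟩
        refine ⟨T.smul_mem k hxT, fun z hz => ?_⟩
        rw [map_smul, LinearMap.smul_apply, hx z hz, smul_zero] } with hSdef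
  have memS : ∀ x : M, x ∈ S ↔ x ∈ T ∧ ∀ y ∈ T, ω x y = 0 := fun x => Iff.rfl
  have hSle : S ≤ T := fun x hx => hx.1
  have hSl : ∀ (a : A) (s : M), s ∈ S → a • s ∈ S := by
    rintro a s ⟨hsT, hs⟩
    refine ⟨hTl a s hsT, fun z hz => ?_⟩
    rw [h2 a s z]
    exact hs _ (hTr a z hz)
  have hSr : ∀ (a : A) (s : M), s ∈ S → op a • s ∈ S := by
    rintro a s ⟨hsT, hs⟩
    refine ⟨hTr a s hsT, fun z hz => ?_⟩
    rw [← hbal a s z]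
    exact hs _ (hTl a z hz)
  rcases hTsimple S hSle hSl hSr with hS0 | hST
  swap
  · -- the radical is everything: done
    intro t ht t' ht'
    have htS : t ∈ S := by rw [hST]; exact ht
    exact htS.2 t' ht'
  -- Hard case : ω is nondegenerate on T; derive a contradiction.
  exfalso
  have hnd' : ∀ x : M, x ∈ T → (∀ y ∈ T, ω x y = 0) → x = 0 := by
    intro x hxT hx
    have hxS : x ∈ S := ⟨hxT, hx⟩
    rw [hS0] at hxS
    simpa using hxS
  obtain ⟨t₀, ht₀T, ht₀⟩ := (Submodule.ne_bot_iff T).mp hTbot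
  -- the annihilator of T is a proper left ideal
  set I : Submodule A A :=
    { carrier := {a | ∀ t ∈ T, a • t = 0}
      add_mem' := by
        intro a b ha hb t ht
        rw [add_smul, ha t ht, hb t ht, add_zero]
      zero_mem' := fun t _ => by rw [zero_smul]
      smul_mem' := by
        intro b a ha t ht
        rw [smul_eq_mul, mul_smul, ha t ht, smul_zero] } with hIdef
  have memI : ∀ a : A, a ∈ I ↔ ∀ t ∈ T, a • t = 0 := fun a => Iff.rfl
  have hInot : ¬ (⊤ : Submodule A A) ≤ I := by
    intro htop
    have h1 : (1 : A) ∈ I := htop trivial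
    exact ht₀ (by rw [← one_smul A t₀]; exact h1 t₀ ht₀T)
  -- a simple left ideal not annihilating T
  have hsimple : ∃ J : Submodule A A, IsAtom J ∧ ¬ J ≤ I := by
    by_contra hcon
    push_neg at hcon
    apply hInot
    rw [← sSup_atoms_eq_top (α := Submodule A A)]
    exact sSup_le fun J hJ => hcon J hJ
  obtain ⟨J, hJatom, hJI⟩ := hsimple
  obtain ⟨f, hfJ, hf0, hid⟩ := aux_atom_idem J hJatom
  have hff : f * f = f := hid f hfJ
  have hft : ∃ t₁, t₁ ∈ T ∧ f • t₁ ≠ 0 := by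
    rw [SetLike.le_def] at hJI
    push_neg at hJI
    obtain ⟨a₀, ha₀J, ha₀I⟩ := hJI
    have hex : ∃ t ∈ T, a₀ • t ≠ 0 := by
      by_contra hcon
      push_neg at hcon
      exact ha₀I ((memI a₀).mpr hcon)
    obtain ⟨t₁, ht₁, ha₀t⟩ := hex
    refine ⟨t₁, ht₁, fun h0 => ha₀t ?_⟩
    rw [← hid a₀ ha₀J, mul_smul, h0, smul_zero]
  obtain ⟨t₁, ht₁T, hft₁⟩ := hft
  -- the functional σ with f * a * f = σ a • f
  obtain ⟨φ₀, hφ₀⟩ : ∃ φ : Module.Dual K A, φ f ≠ 0 := by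
    by_contra hcon
    push_neg at hcon
    exact hf0 ((Module.forall_dual_apply_eq_zero_iff K f).mp hcon)
  set φ : Module.Dual K A := (φ₀ f)⁻¹ • φ₀ with hφdef
  have hφf : φ f = 1 := by
    rw [hφdef, LinearMap.smul_apply, smul_eq_mul, inv_mul_cancel₀ hφ₀]
  have hschur := aux_schur (K := K) J hJatom f hfJ hf0 hid
  set σ : A →ₗ[K] K := φ ∘ₗ (LinearMap.mulLeft K f) ∘ₗ (LinearMap.mulRight K f) with hσdef
  have hσapp : ∀ a : A, σ a = φ (f * (a * f)) := fun a => rfl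
  have hσ : ∀ a : A, f * a * f = σ a • f := by
    intro a
    obtain ⟨lam, hlam⟩ := hschur a
    have h1 : σ a = lam := by
      rw [hσapp, ← mul_assoc, hlam, map_smul, hφf, smul_eq_mul, mul_one]
    rw [h1]
    exact hlam
  have hσf : σ f = 1 := by
    have h1 := hσ f
    rw [hff, hff] at h1
    have h5 : (σ f - 1) • f = 0 := by rw [sub_smul, one_smul, ← h1, sub_self]
    rcases smul_eq_zero.mp h5 with h | h
    · exact sub_eq_zero.mp h
    · exact absurd h hf0
  -- the spaces P = Af and Q = fA
  set P : Submodule K A := LinearMap.ker ((LinearMap.mulRight K f) - LinearMap.id) with hPdef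
  set Q : Submodule K A := LinearMap.ker ((LinearMap.mulLeft K f) - LinearMap.id) with hQdef
  have memP : ∀ x : A, x ∈ P ↔ x * f = x := by
    intro x
    rw [hPdef, LinearMap.mem_ker, LinearMap.sub_apply, LinearMap.mulRight_apply,
      LinearMap.id_apply, sub_eq_zero]
  have memQ : ∀ x : A, x ∈ Q ↔ f * x = x := by
    intro x
    rw [hQdef, LinearMap.mem_ker, LinearMap.sub_apply, LinearMap.mulLeft_apply,
      LinearMap.id_apply, sub_eq_zero]
  have hyx : ∀ y ∈ Q, ∀ x ∈ P, y * x = σ (y * x) • f := by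
    intro y hy x hx
    rw [memQ] at hy
    rw [memP] at hx
    have hmid : f * (y * x) * f = y * x := by
      rw [← mul_assoc f y x, hy, mul_assoc y x f, hx]
    calc y * x = f * (y * x) * f := hmid.symm
      _ = σ (y * x) • f := hσ (y * x)
  -- nondegeneracy of the pairing
  have hQzero : ∀ y : A, y ∈ Q → (∀ x ∈ P, σ (y * x) = 0) → y = 0 := by
    intro y hyQ hy
    have hy0 : ∀ x ∈ P, y * x = 0 := by
      intro x hx
      rw [hyx y hyQ x hx, hy x hx, zero_smul]
    have hyQ' : f * y = y := (memQ y).mp hyQ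
    apply aux_ann_zero (A := A) y
    intro c
    have hcf : c * f ∈ P := by rw [memP, mul_assoc c f f, hff]
    calc y * c * y = (y * c) * (f * y) := by rw [hyQ']
      _ = ((y * c) * f) * y := (mul_assoc (y*c) f y).symm
      _ = (y * (c * f)) * y := by rw [mul_assoc y c f]
      _ = 0 * y := by rw [hy0 (c * f) hcf]
      _ = 0 := zero_mul y
  have hPzero : ∀ x : A, x ∈ P → (∀ y ∈ Q, σ (y * x) = 0) → x = 0 := by
    intro x hxP hx
    have hx0 : ∀ y ∈ Q, y * x = 0 := by
      intro y hy
      rw [hyx y hy x hxP, hx y hy, zero_smul]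
    have hxP' : x * f = x := (memP x).mp hxP
    apply aux_ann_zero (A := A) x
    intro c
    have hfc : f * c ∈ Q := by rw [memQ, ← mul_assoc f f c, hff]
    calc x * c * x = ((x * f) * c) * x := by rw [hxP']
      _ = (x * (f * c)) * x := by rw [mul_assoc x f c]
      _ = x * ((f * c) * x) := mul_assoc x (f*c) x
      _ = x * 0 := by rw [hx0 (f * c) hfc]
      _ = 0 := mul_zero x
  -- the pairing maps
  set Bp : Q →ₗ[K] Module.Dual K P :=
    LinearMap.mk₂ K (fun (y : Q) (x : P) => σ (y.val * x.val))
      (fun y₁ y₂ x => by simp [add_mul])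
      (fun k y x => by simp [smul_mul_assoc])
      (fun y x₁ x₂ => by simp [mul_add])
      (fun k y x => by simp [mul_smul_comm]) with hBpdef
  set Bq : P →ₗ[K] Module.Dual K Q :=
    LinearMap.mk₂ K (fun (x : P) (y : Q) => σ (y.val * x.val))
      (fun x₁ x₂ y => by simp [mul_add])
      (fun k x y => by simp [mul_smul_comm])
      (fun x y₁ y₂ => by simp [add_mul])
      (fun k x y => by simp [smul_mul_assoc]) with hBqdef
  have hBpinj : Function.Injective Bp := by
    intro y₁ y₂ h12
    have h0 : Bp (y₁ - y₂) = 0 := by rw [map_sub, h12, sub_self]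
    have hzero : (y₁ - y₂ : Q).val = 0 := by
      apply hQzero _ (y₁ - y₂).property
      intro x hx
      have h3 : Bp (y₁ - y₂) ⟨x, hx⟩ = 0 := by rw [h0]; rfl
      have h4 : σ (y₁.val * x) - σ (y₂.val * x) = 0 := by
        simpa [hBpdef, LinearMap.mk₂_apply] using h3
      rw [AddSubgroupClass.coe_sub, sub_mul, map_sub]
      exact h4
    have : (y₁ - y₂ : Q) = 0 := Subtype.ext hzero
    exact sub_eq_zero.mp this
  have hBqinj : Function.Injective Bq := by
    intro x₁ x₂ h12
    have h0 : Bq (x₁ - x₂) = 0 := by rw [map_sub, h12, sub_self]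
    have hzero : (x₁ - x₂ : P).val = 0 := by
      apply hPzero _ (x₁ - x₂).property
      intro y hy
      have h3 : Bq (x₁ - x₂) ⟨y, hy⟩ = 0 := by rw [h0]; rfl
      have h4 : σ (y * x₁.val) - σ (y * x₂.val) = 0 := by
        simpa [hBqdef, LinearMap.mk₂_apply] using h3
      rw [AddSubgroupClass.coe_sub, mul_sub, map_sub]
      exact h4
    have : (x₁ - x₂ : P) = 0 := Subtype.ext hzero
    exact sub_eq_zero.mp this
  -- dimensions
  have hd1 : finrank K Q ≤ finrank K P := by
    have := LinearMap.finrank_le_finrank_of_injective hBpinj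
    rwa [Subspace.dual_finrank_eq] at this
  have hd2 : finrank K P ≤ finrank K Q := by
    have := LinearMap.finrank_le_finrank_of_injective hBqinj
    rwa [Subspace.dual_finrank_eq] at this
  have hrange : LinearMap.range Bp = ⊤ := by
    apply Submodule.eq_top_of_finrank_eq
    rw [LinearMap.finrank_range_of_inj hBpinj, Subspace.dual_finrank_eq]
    exact le_antisymm hd1 hd2
  have hBpsurj : Function.Surjective Bp := LinearMap.range_eq_top.mp hrange
  -- dual bases
  set bP : Basis (Fin (finrank K P)) K P := Module.finBasis K P with hbPdef
  have hyc : ∀ i : Fin (finrank K P), ∃ y : Q, Bp y = bP.coord i := fun i => hBpsurj _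
  choose yc hycspec using hyc
  set X : Fin (finrank K P) → A := fun i => (bP i).val with hXdef
  set Y : Fin (finrank K P) → A := fun i => (yc i).val with hYdef
  have hXP : ∀ i, X i ∈ P := fun i => (bP i).property
  have hYQ : ∀ i, Y i ∈ Q := fun i => (yc i).property
  have hpair : ∀ (i : Fin (finrank K P)) (v : P), σ (Y i * v.val) = bP.repr v i := by
    intro i v
    have h1 := LinearMap.congr_fun (hycspec i) v
    simpa [hBpdef, LinearMap.mk₂_apply, Basis.coord_apply, hYdef] using h1
  have keyP : ∀ v : A, v ∈ P → v = ∑ i, σ (Y i * v) • X i := by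
    intro v hv
    have h1 : (⟨v, hv⟩ : P) = ∑ i, bP.repr ⟨v, hv⟩ i • bP i := (bP.sum_repr ⟨v, hv⟩).symm
    have h2' := congrArg Subtype.val h1
    rw [Submodule.coe_sum] at h2'
    calc v = ∑ i, bP.repr ⟨v, hv⟩ i • X i := by
            rw [hXdef]; simpa using h2'
      _ = ∑ i, σ (Y i * v) • X i := by
            refine Finset.sum_congr rfl fun i _ => ?_
            rw [hpair i ⟨v, hv⟩]
  have keyQ : ∀ q : A, q ∈ Q → q = ∑ i, σ (q * X i) • Y i := by
    intro q hq
    set q₂ : Q := ∑ i, σ (q * X i) • yc i with hq₂def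
    have hBq2 : Bp ⟨q, hq⟩ = Bp q₂ := by
      apply LinearMap.ext
      intro x
      have hx := keyP x.val x.property
      have lhs1 : Bp ⟨q, hq⟩ x = σ (q * x.val) := rfl
      have rhs1 : Bp q₂ x = ∑ i, σ (q * X i) * σ (Y i * x.val) := by
        rw [hq₂def, map_sum, LinearMap.sum_apply]
        refine Finset.sum_congr rfl fun i _ => ?_
        rw [map_smul, LinearMap.smul_apply, smul_eq_mul]
        rfl
      rw [lhs1, rhs1]
      conv_lhs => rw [hx]
      rw [Finset.mul_sum, map_sum]
      refine Finset.sum_congr rfl fun i _ => ?_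
      rw [mul_smul_comm, map_smul, smul_eq_mul, mul_comm]
    have h5 := hBpinj hBq2
    have h6 := congrArg Subtype.val h5
    rw [hq₂def, Submodule.coe_sum] at h6
    simpa [hYdef] using h6
  -- the submodule generated by A • (f • T) is all of T
  set G : Set M := {m | ∃ (a : A) (t : M), t ∈ T ∧ m = a • (f • t)} with hGdef
  set T' : Submodule K M := Submodule.span K G with hT'def
  have hT'le : T' ≤ T := by
    rw [hT'def, Submodule.span_le]
    rintro m ⟨a, t, htT, rfl⟩
    exact hTl a _ (hTl f t htT)
  have hT'l : ∀ (a : A) (s : M), s ∈ T' → a • s ∈ T' := by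
    intro a s hs
    induction hs using Submodule.span_induction with
    | mem x hx =>
        obtain ⟨b, t, htT, rfl⟩ := hx
        exact Submodule.subset_span ⟨a * b, t, htT, by rw [mul_smul]⟩
    | zero => rw [smul_zero]; exact T'.zero_mem
    | add x y hx hy ihx ihy => rw [smul_add]; exact T'.add_mem ihx ihy
    | smul k x hx ih => rw [hKA k a x]; exact T'.smul_mem k ih
  have hT'r : ∀ (a : A) (s : M), s ∈ T' → op a • s ∈ T' := by
    intro a s hs
    induction hs using Submodule.span_induction with
    | mem x hx =>
        obtain ⟨b, t, htT, rfl⟩ := hx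
        refine Submodule.subset_span ⟨b, op a • t, hTr a t htT, ?_⟩
        rw [smul_comm (op a) b, smul_comm (op a) f]
    | zero => rw [smul_zero]; exact T'.zero_mem
    | add x y hx hy ihx ihy => rw [smul_add]; exact T'.add_mem ihx ihy
    | smul k x hx ih => rw [hKAop k (op a) x]; exact T'.smul_mem k ih
  have hT'bot : T' ≠ ⊥ := by
    intro h0
    apply hft₁
    have hmem : f • t₁ ∈ T' :=
      Submodule.subset_span ⟨1, t₁, ht₁T, (one_smul A _).symm⟩
    rw [h0, Submodule.mem_bot] at hmem
    exact hmem
  have hT'eq : T' = T := (hTsimple T' hT'le hT'l hT'r).resolve_left hT'bot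
  -- find u ∈ fTf nonzero
  have hTf : ∃ t, t ∈ T ∧ op f • (f • t) ≠ 0 := by
    by_contra hcon
    push_neg at hcon
    have hall : ∀ s, s ∈ T' → op f • s = 0 := by
      intro s hs
      induction hs using Submodule.span_induction with
      | mem x hx =>
          obtain ⟨b, t, htT, rfl⟩ := hx
          rw [smul_comm (op f) b, hcon t htT, smul_zero]
      | zero => rw [smul_zero]
      | add x y hx hy ihx ihy => rw [smul_add, ihx, ihy, add_zero]
      | smul k x hx ih => rw [hKAop, ih, smul_zero]
    apply hft₁
    apply hnd' (f • t₁) (hTl f t₁ ht₁T)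
    intro y hy
    rw [h2 f t₁ y, hall y (by rw [hT'eq]; exact hy), map_zero]
  obtain ⟨t₂, ht₂T, hu0⟩ := hTf
  set u : M := op f • (f • t₂) with hudef
  have huT : u ∈ T := hTr f _ (hTl f t₂ ht₂T)
  have hfu : f • u = u := by
    rw [hudef, smul_comm f (op f), ← mul_smul f f, hff]
  have hopfu : op f • u = u := by
    rw [hudef, ← mul_smul (op f) (op f), ← op_mul, hff]
  -- sigma facts about the bases
  have hfX : ∀ i, f * X i = σ (X i) • f := by
    intro i
    have h1 := hσ (X i)
    rwa [mul_assoc f (X i) f, (memP (X i)).mp (hXP i)] at h1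
  have hYf : ∀ i, Y i * f = σ (Y i) • f := by
    intro i
    have h1 := hσ (Y i)
    rwa [(memQ (Y i)).mp (hYQ i)] at h1
  have hcoef : ∑ i, σ (Y i) * σ (X i) = 1 := by
    have hfP : f ∈ P := (memP f).mpr hff
    have h1 := keyP f hfP
    have h1' : f = ∑ i, σ (Y i) • X i := by
      calc f = ∑ i, σ (Y i * f) • X i := h1
        _ = ∑ i, σ (Y i) • X i := by
            refine Finset.sum_congr rfl fun i _ => ?_
            rw [hYf i, map_smul, smul_eq_mul, hσf, mul_one]
    have h4 : f = (∑ i, σ (Y i) * σ (X i)) • f := by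
      calc f = f * f := hff.symm
        _ = f * (∑ i, σ (Y i) • X i) := by rw [← h1']
        _ = ∑ i, σ (Y i) • (f * X i) := by
            rw [Finset.mul_sum]
            exact Finset.sum_congr rfl fun i _ => mul_smul_comm _ _ _
        _ = ∑ i, σ (Y i) • (σ (X i) • f) := Finset.sum_congr rfl fun i _ => by rw [hfX i]
        _ = ∑ i, (σ (Y i) * σ (X i)) • f := Finset.sum_congr rfl fun i _ => smul_smul _ _ _
        _ = (∑ i, σ (Y i) * σ (X i)) • f := (Finset.sum_smul).symm
    have h5 : ((∑ i, σ (Y i) * σ (X i)) - 1) • f = 0 := by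
      rw [sub_smul, one_smul, ← h4, sub_self]
    rcases smul_eq_zero.mp h5 with h | h
    · exact sub_eq_zero.mp h
    · exact absurd h hf0
  -- the central element z
  set z : M := ∑ i, X i • (op (Y i) • u) with hzdef
  have hzT : z ∈ T := T.sum_mem fun i _ => hTl _ _ (hTr _ _ huT)
  have hfzf : f • (op f • z) = u := by
    rw [hzdef, Finset.smul_sum, Finset.smul_sum]
    have hterm : ∀ i, f • (op f • (X i • (op (Y i) • u))) = (σ (Y i) * σ (X i)) • u := by
      intro i
      calc f • (op f • (X i • (op (Y i) • u)))
          = f • (X i • (op f • (op (Y i) • u))) := by rw [smul_comm (op f) (X i)]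
        _ = f • (X i • (op (Y i * f) • u)) := by
            rw [← mul_smul (op f) (op (Y i)) u, ← op_mul (Y i) f]
        _ = f • (X i • (σ (Y i) • (op f • u))) := by
            rw [hYf i, op_smul, smul_assoc]
        _ = f • (X i • (σ (Y i) • u)) := by rw [hopfu]
        _ = (f * X i) • (σ (Y i) • u) := by rw [mul_smul]
        _ = (σ (X i) • f) • (σ (Y i) • u) := by rw [hfX i]
        _ = σ (X i) • (f • (σ (Y i) • u)) := by rw [smul_assoc]
        _ = σ (X i) • (σ (Y i) • (f • u)) := by rw [hKA (σ (Y i)) f u]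
        _ = σ (X i) • (σ (Y i) • u) := by rw [hfu]
        _ = (σ (Y i) * σ (X i)) • u := by rw [smul_smul, mul_comm]
    rw [Finset.sum_congr rfl fun i _ => hterm i, ← Finset.sum_smul, hcoef, one_smul]
  have hopsum : ∀ (g : Fin (finrank K P) → A), op (∑ j, g j) = ∑ j, op (g j) := by
    intro g
    simpa using map_sum (MulOpposite.opAddEquiv (α := A)) g Finset.univ
  -- centrality of z
  have hcent : ∀ a : A, a • z = op a • z := by
    intro a
    have hL : a • z = ∑ i, ∑ j, σ (Y j * (a * X i)) • (X j • (op (Y i) • u)) := by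
      rw [hzdef, Finset.smul_sum]
      refine Finset.sum_congr rfl fun i _ => ?_
      rw [← mul_smul a (X i)]
      have haX : a * X i ∈ P := by
        rw [memP, mul_assoc, (memP (X i)).mp (hXP i)]
      have hexp := keyP (a * X i) haX
      conv_lhs => rw [hexp]
      rw [Finset.sum_smul]
      exact Finset.sum_congr rfl fun j _ => smul_assoc _ _ _
    have hR : op a • z = ∑ i, ∑ j, σ (Y i * a * X j) • (X i • (op (Y j) • u)) := by
      rw [hzdef, Finset.smul_sum]
      refine Finset.sum_congr rfl fun i _ => ?_
      rw [smul_comm (op a) (X i), ← mul_smul (op a) (op (Y i)) u, ← op_mul (Y i) a]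
      have hYa : Y i * a ∈ Q := by
        rw [memQ, ← mul_assoc, (memQ (Y i)).mp (hYQ i)]
      have hexp := keyQ (Y i * a) hYa
      conv_lhs => rw [hexp]
      rw [hopsum]
      simp only [op_smul]
      rw [Finset.sum_smul]
      simp only [smul_assoc]
      rw [Finset.smul_sum]
      exact Finset.sum_congr rfl fun j _ => by rw [hKA]
    rw [hL, hR, Finset.sum_comm]
    refine Finset.sum_congr rfl fun i _ => Finset.sum_congr rfl fun j _ => ?_
    rw [mul_assoc (Y i) a (X j)]
  have hz0 : z ≠ 0 := by
    intro h0
    apply hu0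
    rw [← hfzf, h0, smul_zero, smul_zero]
  -- the sub-bimodule generated by z is all of T
  set Az : Submodule K M := Submodule.span K {m | ∃ a : A, m = a • z} with hAzdef
  have hAzle : Az ≤ T := by
    rw [hAzdef, Submodule.span_le]
    rintro m ⟨a, rfl⟩
    exact hTl a z hzT
  have hAzl : ∀ (a : A) (s : M), s ∈ Az → a • s ∈ Az := by
    intro a s hs
    induction hs using Submodule.span_induction with
    | mem x hx =>
        obtain ⟨b, rfl⟩ := hx
        exact Submodule.subset_span ⟨a * b, by rw [mul_smul]⟩
    | zero => rw [smul_zero]; exact Az.zero_mem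
    | add x y hx hy ihx ihy => rw [smul_add]; exact Az.add_mem ihx ihy
    | smul k x hx ih => rw [hKA k a x]; exact Az.smul_mem k ih
  have hAzr : ∀ (a : A) (s : M), s ∈ Az → op a • s ∈ Az := by
    intro a s hs
    induction hs using Submodule.span_induction with
    | mem x hx =>
        obtain ⟨b, rfl⟩ := hx
        refine Submodule.subset_span ⟨b * a, ?_⟩
        rw [smul_comm (op a) b, ← hcent a, ← mul_smul]
    | zero => rw [smul_zero]; exact Az.zero_mem
    | add x y hx hy ihx ihy => rw [smul_add]; exact Az.add_mem ihx ihy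
    | smul k x hx ih => rw [hKAop k (op a) x]; exact Az.smul_mem k ih
  have hAzbot : Az ≠ ⊥ := by
    intro h0
    apply hz0
    have hmem : z ∈ Az := Submodule.subset_span ⟨1, (one_smul A z).symm⟩
    rw [h0, Submodule.mem_bot] at hmem
    exact hmem
  have hAzT : Az = T := (hTsimple Az hAzle hAzl hAzr).resolve_left hAzbot
  -- every element of T pairs to zero with z
  have hωz : ∀ t, t ∈ T → ω t z = 0 := by
    intro t ht
    have htAz : t ∈ Az := by rw [hAzT]; exact ht
    clear ht
    induction htAz using Submodule.span_induction with
    | mem x hx =>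
        obtain ⟨a, rfl⟩ := hx
        have e1 : ω (a • z) z = ω z (a • z) := by
          rw [h2 a z z, ← hcent a]
        have e2 : ω z (a • z) = - ω (a • z) z := hskew z (a • z)
        have e3 : ω (a • z) z = - ω (a • z) z := e1.trans e2
        have h4 : (2 : K) * ω (a • z) z = 0 := by
          rw [two_mul]
          linear_combination e3
        rcases mul_eq_zero.mp h4 with h | h
        · exact absurd h two_ne_zero
        · exact h
    | zero => rw [map_zero, LinearMap.zero_apply]
    | add x y hx hy ihx ihy => rw [map_add, LinearMap.add_apply, ihx, ihy, add_zero]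
    | smul k x hx ih => rw [map_smul, LinearMap.smul_apply, ih, smul_zero]
  -- contradiction
  have hzS : z ∈ S := by
    refine ⟨hzT, fun y hy => ?_⟩
    rw [hskew z y, hωz y hy, neg_zero]
  rw [hS0] at hzS
  exact hz0 (by simpa using hzS)
end

section
/- Let M be a finite-dimensional A-A-bimodule over a finite-dimensional semisimple algebra A with a balanced symplectic form ω. Then any isotropic sub-bimodule S of M has a coisotropic bimodule complement, i.e., there exists a sub-bimodule C with M = S ⊕ C and C^⊥ ⊆ C. -/
/-!
Over an algebraically closed field, Wedderburn–Artin makes `A` a product of matrix algebras, so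
`A` (and `Aᵐᵒᵖ`) has a separability idempotent `∑ xᵢ ⊗ yᵢ`; averaging a linear projection
`p ↦ ∑ xᵢ p yᵢ` over both actions gives Maschke's theorem for bimodules.

Pick a bimodule complement `W` of `S^⊥`. The form pairs `W` perfectly with `S`, so every `w ∈ W`
has a unique `h w ∈ S` with `2 ω(h w, w') = -ω(w, w')` on `W`. The graph `L` of `h` is an
isotropic sub-bimodule complementary to `S^⊥`, and then `C = L^⊥` is coisotropic
(`C^⊥ = L ⊆ L^⊥`) and complementary to `S^⊥^⊥ = S`.
-/

open MulOpposite TensorProduct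

/-- `∑ i, x i ⊗ y i` is a separability idempotent of `A`. -/
structure IsSeparabilityFamily (K : Type*) [CommSemiring K] {A : Type*} [Semiring A] [Algebra K A]
    {ι : Type*} [Fintype ι] (x y : ι → A) : Prop where
  sum_mul_eq_one : ∑ i, x i * y i = 1
  sum_mul_tmul : ∀ a : A, ∑ i, (a * x i) ⊗ₜ[K] y i = ∑ i, x i ⊗ₜ[K] (y i * a)

namespace IsSeparabilityFamily

variable {K : Type*} [CommSemiring K]

theorem matrix {n : Type*} [Fintype n] [DecidableEq n] (i₀ : n) :
    IsSeparabilityFamily K (fun j : n ↦ Matrix.single j i₀ (1 : K))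
      (fun j ↦ Matrix.single i₀ j 1) where
  sum_mul_eq_one := by simp [Matrix.sum_single_one]
  sum_mul_tmul a := by
    induction a using Matrix.induction_on' with
    | h_zero => simp
    | h_add p q hp hq =>
      simp only [add_mul, mul_add, add_tmul, tmul_add, Finset.sum_add_distrib, hp, hq]
    | h_std_basis k l c =>
      have hleft (j : n) : Matrix.single k l c * Matrix.single j i₀ 1 =
          if l = j then Matrix.single k i₀ c else 0 := by
        split_ifs with h <;> simp [h]
      have hright (j : n) : Matrix.single i₀ j 1 * Matrix.single k l c =
          if j = k then Matrix.single i₀ l c else 0 := by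
        split_ifs with h <;> simp [h]
      simp only [hleft, hright, ite_tmul, tmul_ite, Finset.sum_ite_eq, Finset.sum_ite_eq',
        Finset.mem_univ, if_true]
      rw [← mul_one c, ← smul_eq_mul, ← Matrix.smul_single, ← Matrix.smul_single, smul_tmul]

theorem pi {ι : Type*} [Fintype ι] [DecidableEq ι] {A : ι → Type*} [∀ i, Semiring (A i)]
    [∀ i, Algebra K (A i)] {κ : ι → Type*} [∀ i, Fintype (κ i)] {x y : ∀ i, κ i → A i}
    (h : ∀ i, IsSeparabilityFamily K (x i) (y i)) :
    IsSeparabilityFamily K (fun p : Σ i, κ i ↦ Pi.single p.1 (x p.1 p.2))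
      (fun p ↦ Pi.single p.1 (y p.1 p.2)) where
  sum_mul_eq_one := by
    calc ∑ p : Σ i, κ i, Pi.single p.1 (x p.1 p.2) * Pi.single p.1 (y p.1 p.2)
        = ∑ i, Pi.single i (∑ k, x i k * y i k) := by
          simp only [Fintype.sum_sigma, ← Pi.single_mul]
          exact Finset.sum_congr rfl fun i _ ↦ (map_sum (AddMonoidHom.single A i) _ _).symm
      _ = 1 := by
          simp only [(h _).sum_mul_eq_one]
          exact Finset.univ_sum_single fun i ↦ 1
  sum_mul_tmul a := by
    rw [Fintype.sum_sigma, Fintype.sum_sigma]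
    refine Finset.sum_congr rfl fun i _ ↦ ?_
    have := congrArg (TensorProduct.map (LinearMap.single K A i) (LinearMap.single K A i))
      ((h i).sum_mul_tmul (a i))
    simpa [map_sum, Pi.single_mul_right, Pi.single_mul_left] using this

theorem map {A B : Type*} [Semiring A] [Algebra K A] [Semiring B] [Algebra K B]
    {ι : Type*} [Fintype ι] {x y : ι → A} (h : IsSeparabilityFamily K x y) (f : A →ₐ[K] B)
    (hf : Function.Surjective f) : IsSeparabilityFamily K (f ∘ x) (f ∘ y) where
  sum_mul_eq_one := by simp [← map_mul, ← map_sum, h.sum_mul_eq_one]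
  sum_mul_tmul b := by
    obtain ⟨a, rfl⟩ := hf b
    have := congrArg (TensorProduct.map f.toLinearMap f.toLinearMap) (h.sum_mul_tmul a)
    simpa [map_sum] using this

section Averaging

variable {R E : Type*} [Semiring R] [Algebra K R] [Semiring E] [Algebra K E]
  {ι : Type*} [Fintype ι] {x y : ι → R}

theorem commute_sum_mul_mul (h : IsSeparabilityFamily K x y)
    (ρ : R →ₐ[K] E) (p : E) (r : R) :
    Commute (ρ r) (∑ i, ρ (x i) * p * ρ (y i)) := by
  let φ : R →ₗ[K] R →ₗ[K] E :=
    (LinearMap.mul K E).compl₁₂ (LinearMap.mulRight K p ∘ₗ ρ.toLinearMap) ρ.toLinearMap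
  have := congrArg (TensorProduct.lift φ) (h.sum_mul_tmul r)
  simp only [map_sum, TensorProduct.lift.tmul] at this
  simpa [φ, Commute, SemiconjBy, Finset.mul_sum, Finset.sum_mul, mul_assoc] using this

theorem isProj_sum_mul_mul {M : Type*} [AddCommMonoid M] [Module K M]
    [Module R M] [IsScalarTower K R M] (h : IsSeparabilityFamily K x y) {N : Submodule K M}
    (hN : ∀ (r : R) (m : M), m ∈ N → r • m ∈ N) {p : Module.End K M} (hp : LinearMap.IsProj N p) :
    LinearMap.IsProj N
      (∑ i, Algebra.lsmul K K M (x i) * p * Algebra.lsmul K K M (y i)) where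
  map_mem m := by
    simpa using N.sum_mem fun i _ ↦ hN (x i) _ (hp.map_mem _)
  map_id n hn := by
    simp [hp.map_id _ (hN _ n hn), smul_smul, ← Finset.sum_smul, h.sum_mul_eq_one]

end Averaging

end IsSeparabilityFamily

theorem exists_isSeparabilityFamily (K A : Type*) [Field K] [IsAlgClosed K] [Ring A] [Algebra K A]
    [IsSemisimpleRing A] [FiniteDimensional K A] :
    ∃ (ι : Type) (_ : Fintype ι) (x y : ι → A), IsSeparabilityFamily K x y := by
  obtain ⟨n, d, hd, ⟨e⟩⟩ := IsSemisimpleRing.exists_algEquiv_pi_matrix_of_isAlgClosed K A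
  exact ⟨_, inferInstance, _, _,
    (IsSeparabilityFamily.pi fun i ↦ .matrix 0).map e.symm.toAlgHom e.symm.surjective⟩

structure IsSubBimodule (A : Type*) {K M : Type*} [Semiring K] [AddCommMonoid M] [Module K M]
    [SMul A M] [SMul Aᵐᵒᵖ M] (N : Submodule K M) : Prop where
  smul_mem : ∀ (a : A) (m : M), m ∈ N → a • m ∈ N
  op_smul_mem : ∀ (a : A) (m : M), m ∈ N → op a • m ∈ N

theorem exists_isCompl_isSubBimodule (K A : Type*) {M : Type*} [Field K] [IsAlgClosed K]
    [Ring A] [Algebra K A] [FiniteDimensional K A] [IsSemisimpleRing A]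
    [AddCommGroup M] [Module K M] [Module A M] [Module Aᵐᵒᵖ M]
    [IsScalarTower K A M] [IsScalarTower K Aᵐᵒᵖ M] [SMulCommClass A Aᵐᵒᵖ M]
    {N : Submodule K M} (hN : IsSubBimodule A N) :
    ∃ N' : Submodule K M, IsSubBimodule A N' ∧ IsCompl N N' := by
  obtain ⟨ι, _, x, y, hxy⟩ := exists_isSeparabilityFamily K A
  obtain ⟨κ, _, x', y', hxy'⟩ := exists_isSeparabilityFamily K Aᵐᵒᵖ
  obtain ⟨N₀, hN₀⟩ := N.exists_isCompl
  let left := Algebra.lsmul K K M (A := A)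
  let right := Algebra.lsmul K K M (A := Aᵐᵒᵖ)
  let q₁ := ∑ i, left (x i) * N.projection N₀ hN₀ * left (y i)
  let q₂ := ∑ j, right (x' j) * q₁ * right (y' j)
  have hq₂ : LinearMap.IsProj N q₂ :=
    hxy'.isProj_sum_mul_mul (fun r ↦ hN.op_smul_mem r.unop) <|
      hxy.isProj_sum_mul_mul hN.smul_mem
        ⟨N.projection_apply_mem hN₀, fun _ ↦ N.projection_apply_of_mem_left hN₀⟩
  have hleft (a : A) : Commute (left a) q₂ := by
    have hlr (b : Aᵐᵒᵖ) : Commute (left a) (right b) := LinearMap.ext (smul_comm a b)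
    exact .sum_right _ _ _ fun j _ ↦
      ((hlr _).mul_right (hxy.commute_sum_mul_mul left _ a)).mul_right (hlr _)
  have hright (a : A) : Commute (right (op a)) q₂ := hxy'.commute_sum_mul_mul right q₁ (op a)
  refine ⟨LinearMap.ker q₂, ⟨fun a m hm ↦ ?_, fun a m hm ↦ ?_⟩, hq₂.isCompl⟩
  · simpa [left, LinearMap.mem_ker.mp hm] using (LinearMap.congr_fun (hleft a) m).symm
  · simpa [right, LinearMap.mem_ker.mp hm] using (LinearMap.congr_fun (hright a) m).symm

namespace LinearMap.BilinForm

variable {K V : Type*} [Field K] [AddCommGroup V] [Module K V] {B : LinearMap.BilinForm K V}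

theorem orthogonal_sup (N L : Submodule K V) :
    B.orthogonal (N ⊔ L) = B.orthogonal N ⊓ B.orthogonal L := by
  refine le_antisymm (le_inf (orthogonal_le le_sup_left) (orthogonal_le le_sup_right)) ?_
  rintro v ⟨hN, hL⟩ u hu
  obtain ⟨n, hn, l, hl, rfl⟩ := Submodule.mem_sup.mp hu
  simp [hN n hn, hL l hl]

def isotropicGraph (B : LinearMap.BilinForm K V) (W S : Submodule K V) : Submodule K V where
  carrier := {v | ∃ w ∈ W, ∃ s ∈ S, w + s = v ∧ ∀ w' ∈ W, 2 * B s w' = -B w w'}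
  add_mem' := by
    rintro _ _ ⟨w₁, hw₁, s₁, hs₁, rfl, h₁⟩ ⟨w₂, hw₂, s₂, hs₂, rfl, h₂⟩
    refine ⟨w₁ + w₂, add_mem hw₁ hw₂, s₁ + s₂, add_mem hs₁ hs₂, add_add_add_comm .., ?_⟩
    intro w' hw'
    simp only [map_add, LinearMap.add_apply, mul_add, h₁ w' hw', h₂ w' hw', neg_add]
  zero_mem' := ⟨0, zero_mem _, 0, zero_mem _, add_zero 0, by simp⟩
  smul_mem' := by
    rintro c _ ⟨w, hw, s, hs, rfl, h⟩
    refine ⟨c • w, W.smul_mem c hw, c • s, S.smul_mem c hs, (smul_add ..).symm, ?_⟩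
    intro w' hw'
    simp only [map_smul, smul_apply, smul_eq_mul, mul_left_comm, h w' hw', mul_neg]

variable {W S : Submodule K V}

theorem isotropicGraph_le_orthogonal (hB : B.IsAlt) (h2 : (2 : K) ≠ 0)
    (hS : S ≤ B.orthogonal S) : B.isotropicGraph W S ≤ B.orthogonal (B.isotropicGraph W S) := by
  rintro _ ⟨w', hw', s', hs', rfl, h'⟩ _ ⟨w, hw, s, hs, rfl, h⟩
  have hss : B s s' = 0 := hS hs' s hs
  have hws' : B w s' = -B s' w := (LinearMap.IsAlt.neg hB s' w).symm
  have hw'w : B w' w = -B w w' := (LinearMap.IsAlt.neg hB w w').symm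
  have : 2 * B (w + s) (w' + s') = 0 := by
    simp only [map_add, LinearMap.add_apply]
    linear_combination 2 * hws' - h' w hw + h w' hw' + hw'w + 2 * hss
  exact (mul_eq_zero.mp this).resolve_left h2

variable [FiniteDimensional K V]

theorem isCompl_orthogonal_of_isCompl (hB : B.Nondegenerate) (hB₀ : B.IsRefl)
    {N L : Submodule K V} (h : IsCompl N L) : IsCompl (B.orthogonal N) (B.orthogonal L) := by
  refine ⟨disjoint_iff.mpr ?_, codisjoint_iff.mpr ?_⟩
  · rw [← orthogonal_sup, h.sup_eq_top, orthogonal_top_eq_bot hB]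
  · rw [← orthogonal_orthogonal hB hB₀ (_ ⊔ _), orthogonal_sup,
      orthogonal_orthogonal hB hB₀, orthogonal_orthogonal hB hB₀, h.inf_eq_bot, orthogonal_bot]

theorem exists_mem_forall_apply_eq (hB : B.Nondegenerate) (hB₀ : B.IsRefl) {S : Submodule K V}
    (f : Module.Dual K V) (hf : ∀ v ∈ B.orthogonal S, f v = 0) :
    ∃ s ∈ S, ∀ v, B s v = f v := by
  refine ⟨(B.toDual hB).symm f, ?_, apply_toDual_symm_apply f⟩
  rw [← orthogonal_orthogonal hB hB₀ S]
  exact fun v hv ↦ hB₀ _ _ (by rw [apply_toDual_symm_apply, hf v hv])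

theorem isCompl_isotropicGraph (hB : B.Nondegenerate) (hB₀ : B.IsRefl) (h2 : (2 : K) ≠ 0)
    (hS : S ≤ B.orthogonal S) (hW : IsCompl W (B.orthogonal S)) :
    IsCompl (B.isotropicGraph W S) (B.orthogonal S) := by
  constructor
  · rw [Submodule.disjoint_def]
    rintro _ ⟨w, hw, s, hs, rfl, h⟩ hv
    obtain rfl : w = 0 := Submodule.disjoint_def.mp hW.disjoint w hw (by
      simpa using sub_mem hv (hS hs))
    suffices ∀ v, B s v = 0 by simpa using hB.1 s this
    intro v
    obtain ⟨w', hw', y, hy, rfl⟩ :=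
      Submodule.mem_sup.mp (hW.sup_eq_top ▸ Submodule.mem_top : v ∈ _)
    have hsw' : 2 * B s w' = 0 := by simpa using h w' hw'
    simp [(mul_eq_zero.mp hsw').resolve_left h2, hy s hs]
  · rw [codisjoint_iff, eq_top_iff]
    rintro v -
    set π := W.projection (B.orthogonal S) hW
    obtain ⟨s, hs, hsπ⟩ := exists_mem_forall_apply_eq hB hB₀ (-(2 : K)⁻¹ • (B (π v) ∘ₗ π))
      fun y hy ↦ by simp [π, (Submodule.projection_apply_eq_zero_iff hW).mpr hy]
    have hgraph : π v + s ∈ B.isotropicGraph W S := by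
      refine ⟨π v, W.projection_apply_mem hW v, s, hs, rfl, fun w' hw' ↦ ?_⟩
      rw [hsπ]
      simp [π, Submodule.projection_apply_of_mem_left hW hw', h2]
    have hrest : v - π v - s ∈ B.orthogonal S := sub_mem (W.sub_projection_mem hW v) (hS hs)
    simpa using Submodule.add_mem_sup hgraph hrest

end LinearMap.BilinForm

section BalancedForm

variable {K V A : Type*} [Field K] [AddCommGroup V] [Module K V]
  [DistribSMul A V] [DistribSMul Aᵐᵒᵖ V] {B : LinearMap.BilinForm K V}

theorem apply_op_smul_of_balanced (hB : B.IsAlt)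
    (hbal : ∀ (a : A) (x y : V), B x (a • y) = B (op a • x) y) (a : A) (x y : V) :
    B x (op a • y) = B (a • x) y := by
  rw [← LinearMap.IsAlt.neg hB, ← hbal, LinearMap.IsAlt.neg hB]

variable (hB : B.IsAlt) (hbal : ∀ (a : A) (x y : V), B x (a • y) = B (op a • x) y)
include hB hbal

theorem IsSubBimodule.orthogonal {N : Submodule K V} (hN : IsSubBimodule A N) :
    IsSubBimodule A (B.orthogonal N) where
  smul_mem a m hm n hn := by
    rw [hbal]
    exact hm _ (hN.op_smul_mem a n hn)
  op_smul_mem a m hm n hn := by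
    rw [apply_op_smul_of_balanced hB hbal]
    exact hm _ (hN.smul_mem a n hn)

theorem IsSubBimodule.isotropicGraph {W S : Submodule K V} (hW : IsSubBimodule A W)
    (hS : IsSubBimodule A S) : IsSubBimodule A (B.isotropicGraph W S) where
  smul_mem := by
    rintro a _ ⟨w, hw, s, hs, rfl, h⟩
    refine ⟨a • w, hW.smul_mem a w hw, a • s, hS.smul_mem a s hs, (smul_add ..).symm, ?_⟩
    intro w' hw'
    rw [← apply_op_smul_of_balanced hB hbal, ← apply_op_smul_of_balanced hB hbal]
    exact h _ (hW.op_smul_mem a w' hw')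
  op_smul_mem := by
    rintro a _ ⟨w, hw, s, hs, rfl, h⟩
    refine ⟨op a • w, hW.op_smul_mem a w hw, op a • s, hS.op_smul_mem a s hs,
      (smul_add ..).symm, ?_⟩
    intro w' hw'
    rw [← hbal, ← hbal]
    exact h _ (hW.smul_mem a w' hw')

end BalancedForm

/-- Any isotropic sub-bimodule of a bimodule with a balanced symplectic form has a
coisotropic bimodule complement. -/
theorem stmt_2 (K : Type*) [Field K] [IsAlgClosed K] [CharZero K]
    (A : Type*) [Ring A] [Algebra K A] [FiniteDimensional K A] [IsSemisimpleRing A]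
    (M : Type*) [AddCommGroup M] [Module K M] [FiniteDimensional K M]
    [Module A M] [Module Aᵐᵒᵖ M]
    [IsScalarTower K A M] [IsScalarTower K Aᵐᵒᵖ M]
    [SMulCommClass A Aᵐᵒᵖ M]
    (ω : M →ₗ[K] M →ₗ[K] K)
    (halt : ∀ x : M, ω x x = 0)
    (hnd : ∀ x : M, (∀ y : M, ω x y = 0) → x = 0)
    (hbal : ∀ (a : A) (x y : M), ω x (a • y) = ω (op a • x) y)
    (S : Submodule K M)
    (hSl : ∀ (a : A) (s : M), s ∈ S → a • s ∈ S)
    (hSr : ∀ (a : A) (s : M), s ∈ S → op a • s ∈ S)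
    (hSiso : ∀ s ∈ S, ∀ s' ∈ S, ω s s' = 0) :
    ∃ C : Submodule K M,
      (∀ (a : A) (c : M), c ∈ C → a • c ∈ C) ∧
      (∀ (a : A) (c : M), c ∈ C → op a • c ∈ C) ∧
      IsCompl S C ∧
      (∀ m : M, (∀ c ∈ C, ω m c = 0) → m ∈ C) := by
  open LinearMap.BilinForm in
  have hω : ω.IsAlt := halt
  have hω₀ : ω.IsRefl := hω.isRefl
  have hωnd : ω.Nondegenerate := (hω₀.nondegenerate_iff_separatingLeft).mpr hnd
  have hS : IsSubBimodule A S := ⟨hSl, hSr⟩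
  have hSiso' : S ≤ orthogonal ω S := fun s' hs' s hs ↦ hSiso s hs s' hs'
  obtain ⟨W, hW, hWS⟩ := exists_isCompl_isSubBimodule K A (hS.orthogonal hω hbal)
  let L := isotropicGraph ω W S
  have hL : IsCompl L (orthogonal ω S) :=
    isCompl_isotropicGraph hωnd hω₀ two_ne_zero hSiso' hWS.symm
  have hC := (hW.isotropicGraph hω hbal hS).orthogonal hω hbal
  refine ⟨orthogonal ω L, hC.smul_mem, hC.op_smul_mem, ?_, fun m hm ↦ ?_⟩
  · simpa [orthogonal_orthogonal hωnd hω₀] using (isCompl_orthogonal_of_isCompl hωnd hω₀ hL).symm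
  · have hmL : m ∈ L := by
      rw [← orthogonal_orthogonal hωnd hω₀ L]
      exact fun c hc ↦ hω₀ _ _ (hm c hc)
    exact isotropicGraph_le_orthogonal hω two_ne_zero hSiso' hmL
end

section
/- Let A be a finite-dimensional semisimple K-algebra, M a finite-dimensional A-A-bimodule with balanced symplectic form ω, and ζ : A → K a trace function (ζ(ab) = ζ(ba)). Define μ : M → A* by μ(m)(a) = ω(m, a·m). Then for any x ∈ M with μ(x) = ζ, the subspace [A,x] = {a·x − x·a : a ∈ A} is isotropic, i.e., ω([a,x],[b,x]) = 0 for all a,b ∈ A. -/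
open MulOpposite

/-- If `μ(x) = ζ` for a trace function `ζ`, then `[A,x]` is an isotropic subspace. -/
theorem stmt_4 (K : Type*) [Field K] [IsAlgClosed K] [CharZero K]
    (A : Type*) [Ring A] [Algebra K A] [FiniteDimensional K A] [IsSemisimpleRing A]
    (M : Type*) [AddCommGroup M] [Module K M] [FiniteDimensional K M]
    [Module A M] [Module Aᵐᵒᵖ M]
    [IsScalarTower K A M] [IsScalarTower K Aᵐᵒᵖ M]
    [SMulCommClass A Aᵐᵒᵖ M]
    (ω : M →ₗ[K] M →ₗ[K] K)
    (halt : ∀ x : M, ω x x = 0)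
    (hnd : ∀ x : M, (∀ y : M, ω x y = 0) → x = 0)
    (hbal : ∀ (a : A) (x y : M), ω x (a • y) = ω (op a • x) y)
    (ζ : A →ₗ[K] K) (hζ : ∀ a b : A, ζ (a * b) = ζ (b * a))
    (x : M) (hx : ∀ a : A, ω x (a • x) = ζ a) :
    ∀ a b : A, ω (a • x - op a • x) (b • x - op b • x) = 0 := by
  have skew : ∀ u v : M, ω u v = - ω v u := by
    intro u v
    have h := halt (u + v)
    simp only [map_add, LinearMap.add_apply, halt u, halt v] at h
    linear_combination h
  intro a b
  have h1 : ω ((op a : Aᵐᵒᵖ) • x) (b • x) = ζ (a * b) := by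
    rw [← hbal, ← mul_smul, hx]
  have h2 : ω (a • x) ((op b : Aᵐᵒᵖ) • x) = - ζ (b * a) := by
    rw [skew, ← hbal, ← mul_smul, hx]
  have h3 : ω (a • x) (b • x) = - ω ((op a : Aᵐᵒᵖ) • x) ((op b : Aᵐᵒᵖ) • x) := by
    rw [skew, hbal, (smul_comm b (op a : Aᵐᵒᵖ) x).symm, skew, hbal, skew]
    ring
  have h4 := hζ a b
  simp only [map_sub, LinearMap.sub_apply]
  linear_combination h3 - h2 - h1 - h4
end

section
/- Let M be a finite-dimensional symplectic vector space, V an isotropic subspace, C a coisotropic subspace with M = V ⊕ C, and W = C ∩ V^⊥. Then C = C^⊥ ⊕ W and C^⊥ = C ∩ W^⊥. -/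
/-- The perpendicular subspace `U^⊥ = {m | ω(m,u) = 0 for all u ∈ U}` with respect to a
bilinear form `ω`. -/
def symplecticPerp {K M : Type*} [Field K] [AddCommGroup M] [Module K M]
    (ω : M →ₗ[K] M →ₗ[K] K) (U : Submodule K M) : Submodule K M where
  carrier := {m : M | ∀ u ∈ U, ω m u = 0}
  add_mem' := by
    intro a b ha hb u hu
    simp [map_add, ha u hu, hb u hu]
  zero_mem' := by
    intro u hu
    simp
  smul_mem' := by
    intro c a ha u hu
    simp [map_smul, ha u hu]

/-!
Nondegeneracy identifies `M` with its dual, so `M = V ⊕ C` gives `M = V^⊥ ⊕ C^⊥`. Since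
`C^⊥ ≤ C`, the modular law turns this into `C = C^⊥ ⊕ (C ∩ V^⊥)`. Finally an element of
`C ∩ W^⊥` is orthogonal to `C^⊥` (by reflexivity) and to `W`, hence to `C^⊥ + W = C`.
-/

section

variable {K M : Type*} [Field K] [AddCommGroup M] [Module K M] (ω : M →ₗ[K] M →ₗ[K] K)

theorem symplecticPerp_eq_comap_dualAnnihilator (U : Submodule K M) :
    symplecticPerp ω U = U.dualAnnihilator.comap ω := by
  ext m
  simp only [Submodule.mem_comap, Submodule.mem_dualAnnihilator]
  rfl

theorem symplecticPerp_antitone {U U' : Submodule K M} (h : U ≤ U') :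
    symplecticPerp ω U' ≤ symplecticPerp ω U :=
  fun _ hm u hu => hm u (h hu)

theorem symplecticPerp_sup (U U' : Submodule K M) :
    symplecticPerp ω (U ⊔ U') = symplecticPerp ω U ⊓ symplecticPerp ω U' := by
  simp only [symplecticPerp_eq_comap_dualAnnihilator, Submodule.dualAnnihilator_sup_eq,
    Submodule.comap_inf]

theorem le_symplecticPerp_symplecticPerp (hω : ω.IsRefl) (U : Submodule K M) :
    U ≤ symplecticPerp ω (symplecticPerp ω U) :=
  fun _ hu _ hm => hω _ _ (hm _ hu)

theorem IsCompl.symplecticPerp [FiniteDimensional K M] (hω : Function.Injective ω)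
    {V C : Submodule K M} (h : IsCompl V C) :
    IsCompl (symplecticPerp ω V) (symplecticPerp ω C) := by
  have hbij : Function.Bijective ω :=
    ⟨hω, (LinearMap.injective_iff_surjective_of_finrank_eq_finrank
      (Subspace.dual_finrank_eq).symm).mp hω⟩
  simp only [symplecticPerp_eq_comap_dualAnnihilator]
  exact (Submodule.orderIsoMapComapOfBijective ω hbij).symm.isCompl
    (Subspace.isCompl_dualAnnihilator h)

end

theorem stmt_9_general (K : Type*) [Field K]
    (M : Type*) [AddCommGroup M] [Module K M] [FiniteDimensional K M]
    (ω : M →ₗ[K] M →ₗ[K] K)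
    (halt : ∀ x : M, ω x x = 0)
    (hnd : ∀ x : M, (∀ y : M, ω x y = 0) → x = 0)
    (V C : Submodule K M)
    (hcompl : IsCompl V C)
    (hCcoiso : symplecticPerp ω C ≤ C) :
    symplecticPerp ω C ⊔ (C ⊓ symplecticPerp ω V) = C ∧
      symplecticPerp ω C ⊓ (C ⊓ symplecticPerp ω V) = ⊥ ∧
      symplecticPerp ω C = C ⊓ symplecticPerp ω (C ⊓ symplecticPerp ω V) := by
  have hω : Function.Injective ω := by
    rw [← LinearMap.ker_eq_bot, Submodule.eq_bot_iff]
    exact fun x hx => hnd x (LinearMap.congr_fun hx)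
  have hperp : IsCompl (symplecticPerp ω V) (symplecticPerp ω C) :=
    hcompl.symplecticPerp ω hω
  have hdecomp : symplecticPerp ω C ⊔ (C ⊓ symplecticPerp ω V) = C := by
    rw [inf_comm, ← sup_inf_assoc_of_le _ hCcoiso, sup_comm, hperp.sup_eq_top, top_inf_eq]
  refine ⟨hdecomp, ?_, le_antisymm ?_ ?_⟩
  · exact hperp.symm.disjoint.mono_right inf_le_right |>.eq_bot
  · exact le_inf hCcoiso (symplecticPerp_antitone ω inf_le_left)
  · calc C ⊓ symplecticPerp ω (C ⊓ symplecticPerp ω V)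
        ≤ symplecticPerp ω (symplecticPerp ω C) ⊓ symplecticPerp ω (C ⊓ symplecticPerp ω V) :=
          inf_le_inf_right _ (le_symplecticPerp_symplecticPerp ω (LinearMap.IsAlt.isRefl halt) C)
      _ = symplecticPerp ω C := by rw [← symplecticPerp_sup, hdecomp]

/-- If `M = V ⊕ C` with `V` isotropic and `C` coisotropic, and `W = C ∩ V^⊥`, then
`C = C^⊥ ⊕ W` and `C^⊥ = C ∩ W^⊥`. -/
theorem stmt_9 (K : Type*) [Field K]
    (M : Type*) [AddCommGroup M] [Module K M] [FiniteDimensional K M]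
    (ω : M →ₗ[K] M →ₗ[K] K)
    (halt : ∀ x : M, ω x x = 0)
    (hnd : ∀ x : M, (∀ y : M, ω x y = 0) → x = 0)
    (V C : Submodule K M)
    (hcompl : IsCompl V C)
    (hViso : V ≤ symplecticPerp ω V)
    (hCcoiso : symplecticPerp ω C ≤ C) :
    symplecticPerp ω C ⊔ (C ⊓ symplecticPerp ω V) = C ∧
      symplecticPerp ω C ⊓ (C ⊓ symplecticPerp ω V) = ⊥ ∧
      symplecticPerp ω C = C ⊓ symplecticPerp ω (C ⊓ symplecticPerp ω V) :=
  stmt_9_general K M ω halt hnd V C hcompl hCcoiso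
end

section
/- Let I be a finite set, and for each i ∈ I let α_i be a positive integer. Suppose α = ∑_{t=1}^r k_t β^{(t)} where k_t are positive integers and β^{(t)} ∈ ℕ^I are nonzero vectors, and suppose ∑_i α_i² = ∑_t k_t². Then r = |I|, the β^{(t)} are exactly the distinct coordinate (standard basis) vectors of ℕ^I, and k_t = α_i where β^{(t)} is the coordinate vector at i. -/
/-- If a sincere vector `α` decomposes as `α = ∑ k_t β^{(t)}` with `k_t > 0` and
`β^{(t)} ≠ 0`, and `∑ α_i² = ∑ k_t²`, then the `β^{(t)}` are exactly the distinct
coordinate vectors and `k_t` is the corresponding component of `α`. -/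
theorem stmt_12 (I : Type*) [Fintype I] [DecidableEq I]
    (α : I → ℕ) (hα : ∀ i, 0 < α i)
    (r : ℕ) (k : Fin r → ℕ) (hk : ∀ t, 0 < k t)
    (β : Fin r → I → ℕ) (hβ : ∀ t, β t ≠ 0)
    (hsum : ∀ i, α i = ∑ t, k t * β t i)
    (hsq : ∑ i, (α i) ^ 2 = ∑ t, (k t) ^ 2) :
    ∃ f : Fin r → I, Function.Bijective f ∧
      ∀ t, β t = Pi.single (f t) 1 ∧ k t = α (f t) := by
  classical
  set c : Fin r → Fin r → ℕ := fun s t => ∑ i, β s i * β t i with hc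
  have key : ∑ i, (α i) ^ 2 = ∑ s, ∑ t, k s * k t * c s t := by
    calc ∑ i, (α i) ^ 2
        = ∑ i, ∑ s, ∑ t, (k s * β s i) * (k t * β t i) := by
          refine Finset.sum_congr rfl fun i _ => ?_
          rw [hsum, sq, Finset.sum_mul_sum]
      _ = ∑ s, ∑ i, ∑ t, (k s * β s i) * (k t * β t i) := Finset.sum_comm
      _ = ∑ s, ∑ t, ∑ i, (k s * β s i) * (k t * β t i) :=
          Finset.sum_congr rfl fun s _ => Finset.sum_comm
      _ = ∑ s, ∑ t, k s * k t * c s t := by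
          refine Finset.sum_congr rfl fun s _ => Finset.sum_congr rfl fun t _ => ?_
          rw [hc, Finset.mul_sum]
          exact Finset.sum_congr rfl fun i _ => by ring
  have hcpos : ∀ t, 1 ≤ c t t := by
    intro t
    obtain ⟨i, hi⟩ := Function.ne_iff.mp (hβ t)
    simp only [Pi.zero_apply] at hi
    calc 1 ≤ β t i * β t i := Nat.one_le_iff_ne_zero.mpr (Nat.mul_ne_zero hi hi)
      _ ≤ c t t := Finset.single_le_sum (f := fun j => β t j * β t j) (fun j _ => Nat.zero_le _) (Finset.mem_univ i)
  have split : ∀ s : Fin r, ∑ t, k s * k t * c s t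
      = k s * k s * c s s + ∑ t ∈ Finset.univ.erase s, k s * k t * c s t :=
    fun s => (Finset.add_sum_erase _ _ (Finset.mem_univ s)).symm
  have hmain : ∑ t, k t ^ 2
      = ∑ s, (k s * k s * c s s) + ∑ s, ∑ t ∈ Finset.univ.erase s, k s * k t * c s t := by
    rw [← hsq, key, ← Finset.sum_add_distrib]
    exact Finset.sum_congr rfl fun s _ => split s
  have hdiag_le : ∀ s : Fin r, k s ^ 2 ≤ k s * k s * c s s := by
    intro s
    calc k s ^ 2 = k s * k s * 1 := by ring
      _ ≤ k s * k s * c s s := Nat.mul_le_mul_left _ (hcpos s)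
  have hs1 : ∑ s, k s ^ 2 ≤ ∑ s, k s * k s * c s s :=
    Finset.sum_le_sum fun s _ => hdiag_le s
  have hoff : ∑ s, ∑ t ∈ Finset.univ.erase s, k s * k t * c s t = 0 := by omega
  have hdiag : ∑ s, k s ^ 2 = ∑ s, (k s * k s * c s s) := by omega
  have hcd : ∀ s, c s s = 1 := by
    intro s
    have h1 := (Finset.sum_eq_sum_iff_of_le (fun s _ => hdiag_le s)).mp hdiag s
      (Finset.mem_univ s)
    rw [sq] at h1
    have h2 : k s * k s * 1 = k s * k s * c s s := by rw [mul_one]; exact h1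
    exact (Nat.eq_of_mul_eq_mul_left (Nat.mul_pos (hk s) (hk s)) h2).symm
  have hczero : ∀ s t, s ≠ t → c s t = 0 := by
    intro s t hst
    have h1 := Finset.sum_eq_zero_iff.mp hoff s (Finset.mem_univ s)
    have h2 := Finset.sum_eq_zero_iff.mp h1 t
      (Finset.mem_erase.mpr ⟨hst.symm, Finset.mem_univ t⟩)
    have hks := hk s; have hkt := hk t
    rcases Nat.mul_eq_zero.mp h2 with h | h
    · rcases Nat.mul_eq_zero.mp h with h' | h' <;> omega
    · exact h
  have hsingle : ∀ t, ∃ i, β t i ≠ 0 ∧ β t = Pi.single i 1 := by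
    intro t
    obtain ⟨i, hi⟩ := Function.ne_iff.mp (hβ t)
    simp only [Pi.zero_apply] at hi
    have hsum1 : ∑ j, β t j * β t j = 1 := hcd t
    have hle : β t i * β t i ≤ 1 := by
      rw [← hsum1]
      exact Finset.single_le_sum (f := fun j => β t j * β t j) (fun j _ => Nat.zero_le _) (Finset.mem_univ i)
    have hbi : β t i = 1 := by
      have := Nat.one_le_iff_ne_zero.mpr hi
      nlinarith
    refine ⟨i, hi, funext fun j => ?_⟩
    by_cases hj : j = i
    · subst hj; simp [hbi]
    · have hrest : ∑ j ∈ Finset.univ.erase i, β t j * β t j = 0 := by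
        have h3 := Finset.add_sum_erase Finset.univ (fun j => β t j * β t j)
          (Finset.mem_univ i)
        simp only [hbi] at h3 hsum1
        omega
      have hz := Finset.sum_eq_zero_iff.mp hrest j
        (Finset.mem_erase.mpr ⟨hj, Finset.mem_univ j⟩)
      have hbj : β t j = 0 := by
        rcases Nat.mul_eq_zero.mp hz with h | h <;> exact h
      rw [Pi.single_eq_of_ne hj]
      exact hbj
  choose f hf0 hf using hsingle
  have hfinj : Function.Injective f := by
    intro s t hst
    by_contra hne
    have h0 := hczero s t hne
    have : β s (f s) * β t (f s) ≤ c s t :=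
      Finset.single_le_sum (f := fun j => β s j * β t j) (fun j _ => Nat.zero_le _) (Finset.mem_univ (f s))
    rw [h0, Nat.le_zero, Nat.mul_eq_zero] at this
    rcases this with h | h
    · exact hf0 s h
    · rw [hst] at h; exact hf0 t h
  have hval : ∀ t, k t = α (f t) := by
    intro t
    rw [hsum (f t)]
    rw [Finset.sum_eq_single t]
    · rw [hf t]
      simp
    · intro s _ hst
      rw [hf s, Pi.single_eq_of_ne (fun h => hst (hfinj h).symm), mul_zero]
    · intro h; exact absurd (Finset.mem_univ t) h
  have hfsurj : Function.Surjective f := by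
    intro i
    have hpos : 0 < ∑ t, k t * β t i := by rw [← hsum]; exact hα i
    obtain ⟨t, _, ht⟩ := Finset.exists_ne_zero_of_sum_ne_zero (Nat.pos_iff_ne_zero.mp hpos)
    refine ⟨t, ?_⟩
    rcases Nat.mul_eq_zero.not.mp ht with h
    have hbti : β t i ≠ 0 := fun h0 => ht (by rw [h0, mul_zero])
    by_contra hne
    rw [hf t, Pi.single_eq_of_ne (fun h => hne h.symm)] at hbti
    exact hbti rfl
  exact ⟨f, ⟨hfinj, hfsurj⟩, fun t => ⟨hf t, hval t⟩⟩
end
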